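/- Let G be the disjoint union of k directed paths with m nodes each (n = km). For every r ≥ 2 and every g ∈ ℤ⁺: the optimal MPP cost with k processors and memory bound r per processor equals m, while the optimal MPP cost with 1 processor and memory bound k·r equals k·m. In particular OPT^(k)/OPT^(1) = 1/k, so the factor-1/k bound of the fair comparison is tight. -/

import Mathlib

/-!
Lower bound: starting from the empty configuration, a pebble can only appear on a node that
already carries one or is being computed. So every sink is computed at some point, and so is
every predecessor of a computed node; on a union of paths this forces all `k * m` nodes to be
computed. A compute move of `p` processors computes at most `p` nodes at cost `1`, hence
`k * m ≤ p * cost`.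

Upper bound: with `k` processors, processor `j` walks along path `j` holding only its current
node and its successor, and reaches all sinks after `m` parallel compute steps. A single
processor with memory `k * r` walks the paths one after the other, keeping only the sinks already
reached, so it never holds more than `(k - 1) + 2 ≤ k * r` pebbles and pays `k * m`.
-/

open scoped Classical

/-- A relation is a DAG edge relation if its transitive closure is irreflexive
(i.e., the directed graph is acyclic). -/
def IsDag {V : Type*} (E : V → V → Prop) : Prop := Irreflexive (Relation.TransGen E)

namespace MPP

variable {V : Type*} [DecidableEq V] {k : ℕ}

/-- A configuration of multiprocessor red-blue pebbling: a set of red pebbles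
for each of the `k` processors, and a set of blue pebbles. -/
structure Conf (V : Type*) (k : ℕ) where
  red : Fin k → Finset V
  blue : Finset V

/-- Moves of multiprocessor red-blue pebbling. `save`/`load` are the parallel I/O
moves (R1-M)/(R2-M), `compute` is (R3-M), and the removals are (R4-M). -/
inductive Move (V : Type*) (k : ℕ) where
  | save (m : ℕ) (f : Fin m → Fin k) (v : Fin m → V)
  | load (m : ℕ) (f : Fin m → Fin k) (v : Fin m → V)
  | compute (m : ℕ) (f : Fin m → Fin k) (v : Fin m → V)
  | removeRed (j : Fin k) (x : V)
  | removeBlue (x : V)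

/-- Add, for each `i`, the node `v i` to the red pebbles of processor `f i`. -/
def addRed (C : Conf V k) {m : ℕ} (f : Fin m → Fin k) (v : Fin m → V) :
    Fin k → Finset V :=
  fun j => C.red j ∪ (Finset.univ.filter (fun i => f i = j)).image v

/-- The effect of a move on a configuration. -/
def apply : Move V k → Conf V k → Conf V k
  | .save _ _ v, C => ⟨C.red, C.blue ∪ Finset.univ.image v⟩
  | .load _ f v, C => ⟨addRed C f v, C.blue⟩
  | .compute _ f v, C => ⟨addRed C f v, C.blue⟩
  | .removeRed j x, C => ⟨Function.update C.red j (C.red j \ {x}), C.blue⟩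
  | .removeBlue x, C => ⟨C.red, C.blue \ {x}⟩

/-- When a move may legally be performed in a given configuration. -/
def Legal (E : V → V → Prop) : Conf V k → Move V k → Prop
  | C, .save m f v => m ≤ k ∧ Function.Injective f ∧ ∀ i, v i ∈ C.red (f i)
  | C, .load m f v => m ≤ k ∧ Function.Injective f ∧ ∀ i, v i ∈ C.blue
  | C, .compute m f v =>
      m ≤ k ∧ Function.Injective f ∧ ∀ i, ∀ u, E u (v i) → u ∈ C.red (f i)
  | _, .removeRed _ _ => True
  | _, .removeBlue _ => True

/-- A configuration respects the fast-memory bound `r` for every processor. -/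
def Valid (r : ℕ) (C : Conf V k) : Prop := ∀ j, (C.red j).card ≤ r

/-- `Run E r C ms C'` : starting from configuration `C`, the list of moves `ms`
may be legally executed (respecting the memory bound `r` throughout) and leads
to configuration `C'`. -/
inductive Run (E : V → V → Prop) (r : ℕ) : Conf V k → List (Move V k) → Conf V k → Prop
  | nil (C : Conf V k) : Run E r C [] C
  | cons {C C'' : Conf V k} {mv : Move V k} {ms : List (Move V k)} :
      Legal E C mv → Valid r (apply mv C) → Run E r (apply mv C) ms C'' →
      Run E r C (mv :: ms) C''

/-- Cost of a single move: `g` for I/O, `1` for compute, `0` for removal. -/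
def moveCost (g : ℕ) : Move V k → ℕ
  | .save .. => g
  | .load .. => g
  | .compute .. => 1
  | .removeRed .. => 0
  | .removeBlue .. => 0

/-- Total cost of a sequence of moves. -/
def cost (g : ℕ) (ms : List (Move V k)) : ℕ := (ms.map (moveCost g)).sum

def isIO : Move V k → Bool
  | .save .. => true
  | .load .. => true
  | _ => false

/-- The number of I/O moves in a sequence of moves. -/
def ioCount (ms : List (Move V k)) : ℕ := (ms.filter isIO).length

def isCompute : Move V k → Bool
  | .compute .. => true
  | _ => false

/-- The number of compute moves in a sequence of moves. -/
def computeCount (ms : List (Move V k)) : ℕ := (ms.filter isCompute).length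

/-- A sink of the DAG: a node with no outgoing edge. -/
def IsSink (E : V → V → Prop) (v : V) : Prop := ∀ u, ¬ E v u

/-- A terminal configuration: every sink carries at least one pebble. -/
def Terminal (E : V → V → Prop) (C : Conf V k) : Prop :=
  ∀ v, IsSink E v → v ∈ C.blue ∨ ∃ j, v ∈ C.red j

/-- The initial (all-empty) configuration. -/
def init (V : Type*) (k : ℕ) : Conf V k := ⟨fun _ => ∅, ∅⟩

/-- `ms` is a pebbling strategy: a legal run from the empty configuration ending
in a terminal configuration. -/
def IsPebbling (E : V → V → Prop) (r : ℕ) (ms : List (Move V k)) : Prop :=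
  ∃ Cf, Run E r (init V k) ms Cf ∧ Terminal E Cf

/-- The optimal (minimum) cost of a pebbling strategy with `k` processors,
memory bound `r` per processor, and I/O cost `g`. -/
noncomputable def optCost (E : V → V → Prop) (k r g : ℕ) : ℕ :=
  sInf {c | ∃ ms : List (Move V k), IsPebbling E r ms ∧ cost g ms = c}

/-- The minimum number of I/O moves among all minimum-cost pebbling strategies. -/
noncomputable def optIO (E : V → V → Prop) (k r g : ℕ) : ℕ :=
  sInf {q | ∃ ms : List (Move V k),
    IsPebbling E r ms ∧ cost g ms = optCost E k r g ∧ ioCount ms = q}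

/-- The maximum in-degree `Δ_in` of the DAG. -/
noncomputable def maxInDeg (E : V → V → Prop) [Fintype V] : ℕ :=
  Finset.univ.sup fun v => (Finset.univ.filter fun u => E u v).card

/-- The set of nodes computed by a move. -/
def computes : Move V k → Set V
  | .compute _ _ v => Set.range v
  | _ => ∅

/-- `x` is computed by the move at position `s` of `ms`. -/
def ComputedAt (ms : List (Move V k)) (s : ℕ) (x : V) : Prop :=
  ∃ mv, ms[s]? = some mv ∧ x ∈ computes mv

/-- The set of nodes computed by some move strictly before position `t`. -/
def computedBefore (ms : List (Move V k)) (t : ℕ) : Set V :=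
  {x | ∃ s < t, ComputedAt ms s x}

/-- `x` is ready at position `t`: it has not yet been computed, but all its
in-neighbors have been. -/
def Ready (E : V → V → Prop) (ms : List (Move V k)) (t : ℕ) (x : V) : Prop :=
  x ∉ computedBefore ms t ∧ ∀ u, E u x → u ∈ computedBefore ms t

/-- The number of nodes that are ready at position `t`. -/
noncomputable def readyCount (E : V → V → Prop) [Fintype V]
    (ms : List (Move V k)) (t : ℕ) : ℕ :=
  (Finset.univ.filter (Ready E ms t)).card

end MPP

/-- The disjoint union of `k` directed paths with `m` nodes each. -/
def disjointPaths (k m : ℕ) : Fin k × Fin m → Fin k × Fin m → Prop :=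
  fun a b => a.1 = b.1 ∧ (b.2 : ℕ) = (a.2 : ℕ) + 1


namespace MPP

variable {V : Type*} {k r : ℕ}

theorem Valid.mono {C C' : Conf V k} (hC : Valid r C) (h : ∀ j, C'.red j ⊆ C.red j) :
    Valid r C' :=
  fun j => (Finset.card_le_card (h j)).trans (hC j)

def Pebbled (C : Conf V k) (x : V) : Prop := x ∈ C.blue ∨ ∃ j, x ∈ C.red j

theorem not_pebbled_init (x : V) : ¬ Pebbled (init V k) x := by
  simp [Pebbled, init]

variable [DecidableEq V] {E : V → V → Prop} {g c : ℕ}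

theorem Run.append {C C' C'' : Conf V k} {ms ms' : List (Move V k)} (h : Run E r C ms C')
    (h' : Run E r C' ms' C'') : Run E r C (ms ++ ms') C'' := by
  induction h with
  | nil => exact h'
  | cons hL hV _ ih => exact .cons hL hV (ih h')

def ReachableWithin (E : V → V → Prop) (r g : ℕ) (C C' : Conf V k) (c : ℕ) : Prop :=
  ∃ ms, Run E r C ms C' ∧ cost g ms ≤ c

namespace ReachableWithin

theorem refl (C : Conf V k) : ReachableWithin E r g C C 0 :=
  ⟨[], .nil C, le_rfl⟩

theorem mono {C C' : Conf V k} {c c' : ℕ} (h : ReachableWithin E r g C C' c) (hc : c ≤ c') :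
    ReachableWithin E r g C C' c' :=
  h.imp fun _ ⟨hrun, hcost⟩ => ⟨hrun, hcost.trans hc⟩

theorem single {C : Conf V k} {mv : Move V k} (hL : Legal E C mv) (hV : Valid r (apply mv C)) :
    ReachableWithin E r g C (apply mv C) (moveCost g mv) :=
  ⟨[mv], .cons hL hV (.nil _), by simp [cost]⟩

theorem trans {C C' C'' : Conf V k} {c c' : ℕ} (h : ReachableWithin E r g C C' c)
    (h' : ReachableWithin E r g C' C'' c') : ReachableWithin E r g C C'' (c + c') := by
  obtain ⟨ms, hrun, hcost⟩ := h
  obtain ⟨ms', hrun', hcost'⟩ := h'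
  refine ⟨ms ++ ms', hrun.append hrun', ?_⟩
  simp only [cost, List.map_append, List.sum_append] at *
  omega

end ReachableWithin

theorem optCost_eq_of_reachableWithin {C : Conf V k}
    (hreach : ReachableWithin E r g (init V k) C c) (hC : Terminal E C)
    (hlower : ∀ ms : List (Move V k), IsPebbling E r ms → c ≤ cost g ms) :
    optCost E k r g = c := by
  obtain ⟨ms, hrun, hcost⟩ := hreach
  have hmem : cost g ms ∈ {c | ∃ ms : List (Move V k), IsPebbling E r ms ∧ cost g ms = c} :=
    ⟨ms, ⟨C, hrun, hC⟩, rfl⟩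
  refine le_antisymm ((Nat.sInf_le hmem).trans hcost) (le_csInf ⟨_, hmem⟩ ?_)
  rintro _ ⟨ms', hms', rfl⟩
  exact hlower ms' hms'

theorem reachableWithin_discard {C : Conf V k} (hC : Valid r C) {D : Fin k → Finset V}
    (hD : ∀ j, D j ⊆ C.red j) : ReachableWithin E r g C ⟨D, C.blue⟩ 0 := by
  induction hN : ∑ j, (C.red j).card using Nat.strong_induction_on generalizing C with
  | _ N ih =>
  by_cases hCD : C.red = D
  · obtain ⟨R, B⟩ := C
    subst hCD
    exact .refl _
  obtain ⟨j, hj⟩ := Function.ne_iff.1 hCD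
  obtain ⟨x, hxC, hxD⟩ := Finset.exists_of_ssubset ((hD j).ssubset_of_ne (Ne.symm hj))
  let C₁ : Conf V k := ⟨Function.update C.red j ((C.red j).erase x), C.blue⟩
  have hsub : ∀ i, C₁.red i ⊆ C.red i := by
    intro i
    rcases eq_or_ne i j with rfl | hij
    · simp [C₁, Finset.erase_subset]
    · simp [C₁, hij]
  have hlt : ∑ i, (C₁.red i).card < N := by
    rw [← hN]
    refine Finset.sum_lt_sum (fun i _ => Finset.card_le_card (hsub i))
      ⟨j, Finset.mem_univ _, ?_⟩
    simpa [C₁] using Finset.card_lt_card (Finset.erase_ssubset hxC)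
  have hD₁ : ∀ i, D i ⊆ C₁.red i := by
    intro i
    rcases eq_or_ne i j with rfl | hij
    · simp only [C₁, Function.update_self]
      exact fun y hy => Finset.mem_erase.2 ⟨fun h => hxD (h ▸ hy), hD i hy⟩
    · simpa [C₁, hij] using hD i
  have hV₁ := hC.mono hsub
  have hremove : apply (.removeRed j x) C = C₁ := by
    simp [apply, C₁, Finset.sdiff_singleton_eq_erase]
  have hstep : ReachableWithin E r g C C₁ 0 :=
    hremove ▸ ReachableWithin.single (mv := .removeRed j x) trivial (hremove ▸ hV₁)
  exact hstep.trans (ih _ hlt hV₁ hD₁ rfl)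

theorem addRed_id (C : Conf V k) (v : Fin k → V) :
    addRed C id v = fun j => insert (v j) (C.red j) := by
  funext j
  ext x
  simp [addRed, or_comm, eq_comm]

theorem reachableWithin_computeAll {C : Conf V k} {v : Fin k → V}
    (hv : ∀ j u, E u (v j) → u ∈ C.red j) (hr : ∀ j, (insert (v j) (C.red j)).card ≤ r) :
    ReachableWithin E r g C ⟨fun j => insert (v j) (C.red j), C.blue⟩ 1 := by
  have happly : apply (.compute k id v) C = ⟨fun j => insert (v j) (C.red j), C.blue⟩ := by
    simp [apply, addRed_id]
  exact happly ▸ ReachableWithin.single ⟨le_rfl, Function.injective_id, hv⟩ (happly ▸ hr)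

def Move.computedNodes : Move V k → Finset V
  | .compute _ _ v => Finset.univ.image v
  | _ => ∅

def computedNodes : List (Move V k) → Finset V
  | [] => ∅
  | mv :: ms => mv.computedNodes ∪ computedNodes ms

theorem Legal.pebbled_of_pebbled_apply {C : Conf V k} {mv : Move V k} {x : V}
    (hL : Legal E C mv) (hx : Pebbled (apply mv C) x) : Pebbled C x ∨ x ∈ mv.computedNodes := by
  cases mv with
  | save _ f v =>
    simp only [Pebbled, apply, Finset.mem_union, Finset.mem_image, Finset.mem_univ, true_and] at hx
    rcases hx with (hx | ⟨i, rfl⟩) | hx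
    exacts [.inl (.inl hx), .inl (.inr ⟨f i, hL.2.2 i⟩), .inl (.inr hx)]
  | load _ f v =>
    simp only [Pebbled, apply, addRed, Finset.mem_union, Finset.mem_image, Finset.mem_filter,
      Finset.mem_univ, true_and] at hx
    rcases hx with hx | ⟨j, hx | ⟨i, -, rfl⟩⟩
    exacts [.inl (.inl hx), .inl (.inr ⟨j, hx⟩), .inl (.inl (hL.2.2 i))]
  | compute _ f v =>
    simp only [Pebbled, apply, addRed, Finset.mem_union, Finset.mem_image, Finset.mem_filter,
      Finset.mem_univ, true_and] at hx
    rcases hx with hx | ⟨j, hx | ⟨i, -, rfl⟩⟩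
    exacts [.inl (.inl hx), .inl (.inr ⟨j, hx⟩), .inr (by simp [Move.computedNodes])]
  | removeRed j y =>
    rcases hx with hx | ⟨i, hx⟩
    · exact .inl (.inl hx)
    · refine .inl (.inr ⟨i, ?_⟩)
      rcases eq_or_ne i j with rfl | hij
      · simp only [apply, Function.update_self, Finset.mem_sdiff] at hx
        exact hx.1
      · simpa [apply, hij] using hx
  | removeBlue y =>
    rcases hx with hx | hx
    exacts [.inl (.inl (Finset.mem_sdiff.1 hx).1), .inl (.inr hx)]

theorem Legal.exists_mem_red_of_mem_computedNodes {C : Conf V k} {mv : Move V k} {x u : V}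
    (hL : Legal E C mv) (hx : x ∈ mv.computedNodes) (hu : E u x) : ∃ j, u ∈ C.red j := by
  cases mv with
  | compute _ f v =>
    obtain ⟨i, -, rfl⟩ := Finset.mem_image.1 hx
    exact ⟨f i, hL.2.2 i u hu⟩
  | _ => simp [Move.computedNodes] at hx

theorem Legal.card_computedNodes_le {C : Conf V k} {mv : Move V k} (hL : Legal E C mv) :
    mv.computedNodes.card ≤ k * moveCost g mv := by
  cases mv with
  | compute =>
    simpa [Move.computedNodes, moveCost] using Finset.card_image_le.trans (by simpa using hL.1)
  | _ => simp [Move.computedNodes]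

namespace Run

variable {C C' : Conf V k} {ms : List (Move V k)}

theorem pebbled_or_mem_computedNodes (h : Run E r C ms C') {x : V} (hx : Pebbled C' x) :
    Pebbled C x ∨ x ∈ computedNodes ms := by
  induction h with
  | nil => exact .inl hx
  | cons hL _ _ ih =>
    rcases ih hx with hx | hx
    · exact (hL.pebbled_of_pebbled_apply hx).imp_right (Finset.mem_union_left _)
    · exact .inr (Finset.mem_union_right _ hx)

theorem pebbled_or_mem_computedNodes_of_edge (h : Run E r C ms C') {x u : V}
    (hx : x ∈ computedNodes ms) (hu : E u x) : Pebbled C u ∨ u ∈ computedNodes ms := by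
  induction h with
  | nil => simp [computedNodes] at hx
  | cons hL _ _ ih =>
    rcases Finset.mem_union.1 hx with hx | hx
    · exact .inl (.inr (hL.exists_mem_red_of_mem_computedNodes hx hu))
    · rcases ih hx with hu | hu
      · exact (hL.pebbled_of_pebbled_apply hu).imp_right (Finset.mem_union_left _)
      · exact .inr (Finset.mem_union_right _ hu)

theorem card_computedNodes_le (h : Run E r C ms C') :
    (computedNodes ms).card ≤ k * cost g ms := by
  induction h with
  | nil => simp [computedNodes]
  | cons hL _ _ ih =>
    simp only [computedNodes, cost, List.map_cons, List.sum_cons, mul_add] at ih ⊢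
    exact (Finset.card_union_le _ _).trans (add_le_add hL.card_computedNodes_le ih)

end Run

namespace IsPebbling

variable {ms : List (Move V k)}

theorem mem_computedNodes_of_isSink (h : IsPebbling E r ms) {v : V} (hv : IsSink E v) :
    v ∈ computedNodes ms :=
  let ⟨_, hrun, hterm⟩ := h
  (hrun.pebbled_or_mem_computedNodes (hterm v hv)).resolve_left (not_pebbled_init v)

theorem mem_computedNodes_of_edge (h : IsPebbling E r ms) {u x : V} (hu : E u x)
    (hx : x ∈ computedNodes ms) : u ∈ computedNodes ms :=
  let ⟨_, hrun, _⟩ := h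
  (hrun.pebbled_or_mem_computedNodes_of_edge hx hu).resolve_left (not_pebbled_init u)

theorem card_computedNodes_le (h : IsPebbling E r ms) :
    (computedNodes ms).card ≤ k * cost g ms :=
  let ⟨_, hrun, _⟩ := h
  hrun.card_computedNodes_le

end IsPebbling

end MPP

section disjointPaths

open MPP

variable {k n kp r g : ℕ}

theorem disjointPaths_castSucc_succ (j : Fin k) (i : Fin n) :
    disjointPaths k (n + 1) (j, i.castSucc) (j, i.succ) :=
  ⟨rfl, rfl⟩

theorem disjointPaths_succ_iff {u : Fin k × Fin (n + 1)} {j : Fin k} {i : Fin n} :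
    disjointPaths k (n + 1) u (j, i.succ) ↔ u = (j, i.castSucc) := by
  obtain ⟨a, b⟩ := u
  simp [disjointPaths, Prod.ext_iff, Fin.ext_iff, eq_comm]

theorem not_disjointPaths_zero (u : Fin k × Fin (n + 1)) (j : Fin k) :
    ¬ disjointPaths k (n + 1) u (j, 0) := by
  simp [disjointPaths]

theorem isSink_disjointPaths_iff {v : Fin k × Fin (n + 1)} :
    IsSink (disjointPaths k (n + 1)) v ↔ v.2 = Fin.last n := by
  refine ⟨fun hv => ?_, fun hv u ⟨_, hu⟩ => ?_⟩
  · obtain ⟨j, b⟩ := v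
    by_contra hlast
    obtain ⟨i, rfl⟩ := Fin.exists_castSucc_eq.2 hlast
    exact hv _ (disjointPaths_castSucc_succ j i)
  · have := u.2.isLt
    simp only [hv, Fin.val_last] at hu
    omega

theorem disjointPaths_induction {m : ℕ} {P : Fin k × Fin m → Prop}
    (hsink : ∀ v, IsSink (disjointPaths k m) v → P v)
    (hpred : ∀ u v, disjointPaths k m u v → P v → P u) (v : Fin k × Fin m) : P v := by
  obtain ⟨j, i⟩ := v
  cases m with
  | zero => exact i.elim0
  | succ n =>
    induction i using Fin.reverseInduction with
    | last => exact hsink _ (isSink_disjointPaths_iff.2 rfl)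
    | cast i ih => exact hpred _ _ (disjointPaths_castSucc_succ j i) ih

theorem MPP.IsPebbling.mul_le_mul_cost {m : ℕ} {ms : List (Move (Fin k × Fin m) kp)}
    (h : IsPebbling (disjointPaths k m) r ms) : k * m ≤ kp * cost g ms := by
  have hall : computedNodes ms = Finset.univ :=
    Finset.eq_univ_of_forall <| disjointPaths_induction
      (fun _ hv => h.mem_computedNodes_of_isSink hv)
      (fun _ _ huv hv => h.mem_computedNodes_of_edge huv hv)
  simpa [hall] using h.card_computedNodes_le

/-- Processor `j` holds node `i` of path `p j` on top of the fixed pebbles `B j`. With `p = id`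
this is the `k`-processor schedule; with one processor and `B` the sinks of the paths already
walked, it is the sequential one. -/
def frontierConf (p : Fin kp → Fin k) (B : Fin kp → Finset (Fin k × Fin (n + 1)))
    (i : Fin (n + 1)) : Conf (Fin k × Fin (n + 1)) kp :=
  ⟨fun j => insert (p j, i) (B j), ∅⟩

theorem reachableWithin_frontierConf (p : Fin kp → Fin k)
    {B : Fin kp → Finset (Fin k × Fin (n + 1))} (hB : ∀ j, (B j).card + 2 ≤ r)
    (i : Fin (n + 1)) :
    ReachableWithin (disjointPaths k (n + 1)) r g ⟨B, ∅⟩ (frontierConf p B i) (i + 1) := by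
  induction i using Fin.induction with
  | zero =>
    have hcompute : ReachableWithin _ r g ⟨B, ∅⟩ (frontierConf p B 0) 1 :=
      reachableWithin_computeAll (fun _ u hu => absurd hu (not_disjointPaths_zero u _))
        (fun j => (Finset.card_insert_le _ _).trans (by linarith [hB j]))
    exact hcompute.mono (by simp)
  | succ i ih =>
    have hcard : ∀ j, (insert (p j, i.succ) ((frontierConf p B i.castSucc).red j)).card ≤ r :=
      fun j => (Finset.card_insert_le _ _).trans
        ((Nat.add_le_add_right (Finset.card_insert_le _ _) 1).trans (hB j))
    have hcompute := reachableWithin_computeAll (E := disjointPaths k (n + 1)) (g := g)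
      (v := fun j => (p j, i.succ)) (fun j u hu => by
        simp [frontierConf, disjointPaths_succ_iff.1 hu]) hcard
    have hdiscard := reachableWithin_discard (E := disjointPaths k (n + 1)) (g := g)
      (C := ⟨fun j => insert (p j, i.succ) ((frontierConf p B i.castSucc).red j), ∅⟩) hcard
      (D := (frontierConf p B i.succ).red)
      (fun j => Finset.insert_subset_insert _ (Finset.subset_insert _ _))
    exact (ih.trans (hcompute.trans hdiscard)).mono (by simp)

theorem terminal_frontierConf_last (B : Fin k → Finset (Fin k × Fin (n + 1))) :
    Terminal (disjointPaths k (n + 1)) (frontierConf id B (Fin.last n)) := by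
  intro v hv
  refine .inr ⟨v.1, Finset.mem_insert.2 (.inl ?_)⟩
  exact Prod.ext rfl (isSink_disjointPaths_iff.1 hv)

theorem reachableWithin_sinks (hr : 2 ≤ r) (T : Finset (Fin k)) :
    ReachableWithin (disjointPaths k (n + 1)) (k * r) g (init _ 1)
      ⟨fun _ => T.image (·, Fin.last n), ∅⟩ (T.card * (n + 1)) := by
  induction T using Finset.induction_on with
  | empty =>
    have hinit : (⟨fun _ => (∅ : Finset (Fin k)).image (·, Fin.last n), ∅⟩ : Conf _ 1) =
        init _ 1 := by
      simp [init]
    exact hinit ▸ (ReachableWithin.refl _).mono (Nat.zero_le _)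
  | insert j T hj ih =>
    have hT : T.card < k := by simpa using Finset.card_lt_univ_of_notMem hj
    have hcard : ∀ _ : Fin 1, (T.image (·, Fin.last n)).card + 2 ≤ k * r := fun _ => by
      nlinarith [Finset.card_image_le (s := T) (f := (·, Fin.last n))]
    have hpath := reachableWithin_frontierConf (g := g) (fun _ => j) hcard (Fin.last n)
    have hconf :
        frontierConf (fun _ : Fin 1 => j) (fun _ => T.image (·, Fin.last n)) (Fin.last n) =
          ⟨fun _ => (insert j T).image (·, Fin.last n), ∅⟩ := by
      simp [frontierConf, Finset.image_insert]
    rw [hconf] at hpath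
    exact (ih.trans hpath).mono (by simp [Finset.card_insert_of_notMem hj, add_mul])

theorem terminal_sinks :
    Terminal (disjointPaths k (n + 1))
      (⟨fun _ => Finset.univ.image (·, Fin.last n), ∅⟩ : Conf _ 1) := by
  intro v hv
  exact .inr ⟨0, Finset.mem_image.2 ⟨v.1, Finset.mem_univ _,
    Prod.ext rfl (isSink_disjointPaths_iff.1 hv).symm⟩⟩

end disjointPaths

theorem stmt8_general (k m r g : ℕ) (hk : 0 < k) (hm : 0 < m) (hr : 2 ≤ r) :
    MPP.optCost (disjointPaths k m) k r g = m ∧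
    MPP.optCost (disjointPaths k m) 1 (k * r) g = k * m := by
  obtain ⟨n, rfl⟩ : ∃ n, m = n + 1 := ⟨m - 1, by omega⟩
  constructor
  · have hparallel := reachableWithin_frontierConf (g := g) id
      (B := fun _ => (∅ : Finset (Fin k × Fin (n + 1)))) (fun _ => by simpa using hr)
      (Fin.last n)
    exact MPP.optCost_eq_of_reachableWithin hparallel (terminal_frontierConf_last _) fun ms h =>
      Nat.le_of_mul_le_mul_left (h.mul_le_mul_cost (g := g)) hk
  · exact MPP.optCost_eq_of_reachableWithin
      ((reachableWithin_sinks hr Finset.univ).mono (by simp)) terminal_sinks fun ms h => by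
        simpa using h.mul_le_mul_cost

/-- Let `G` be the disjoint union of `k` directed paths with `m`
nodes each (`n = km`). For every `r ≥ 2` and `g ∈ ℤ⁺`: the optimal MPP cost with
`k` processors and memory bound `r` per processor equals `m`, while the optimal
MPP cost with 1 processor and memory bound `k·r` equals `k·m`; in particular
`OPT⁽ᵏ⁾/OPT⁽¹⁾ = 1/k`, so the factor-`1/k` bound of the fair comparison is
tight. -/
theorem stmt8 (k m r g : ℕ) (hk : 0 < k) (hm : 0 < m) (hr : 2 ≤ r) (hg : 0 < g) :
    MPP.optCost (disjointPaths k m) k r g = m ∧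
    MPP.optCost (disjointPaths k m) 1 (k * r) g = k * m :=
  stmt8_general k m r g hk hm hr
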